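/- arXiv:2303.15328 — 8 statements merged into one kernel-verified Lean document; each statement's English description precedes it below -/
import Mathlib

section
/- Let h : [0,1] → [0,1] be a Lebesgue-measure-preserving bijection. Define A_h(x,y) = λ({t ∈ [0,x] : h(t) ≤ y}), where λ is Lebesgue measure. Then A_h is a bivariate copula: A_h(x,0) = A_h(0,y) = 0, A_h(x,1) = x, A_h(1,y) = y, and A_h is 2-increasing. -/
open MeasureTheory Set

/-- The completely dependent copula induced by a measure-preserving transformation
`h` of `[0,1]`:  `A_h(x,y) = λ({t ∈ [0,x] : h t ≤ y})`. -/
noncomputable def Ah (h : unitInterval → unitInterval) (x y : unitInterval) : ℝ :=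
  (volume {t : unitInterval | t ≤ x ∧ h t ≤ y}).toReal

/-! `A_h(x, y)` is the measure of the intersection of the two monotone families of sets
`[0, x]` and `h⁻¹[0, y]`, so the boundary conditions come from `λ[0, x] = x` and the
invariance of `λ` under `h`, and 2-increasingness is inclusion–exclusion applied to
`[0, x₂] ∩ h⁻¹[0, y₁]` and `[0, x₁] ∩ h⁻¹[0, y₂]`. -/

theorem MeasureTheory.measureReal_inter_add_inter_le {α : Type*} [MeasurableSpace α]
    {μ : Measure α} [IsFiniteMeasure μ] {A₁ A₂ B₁ B₂ : Set α} (hA : A₁ ⊆ A₂) (hB : B₁ ⊆ B₂)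
    (hmeas : MeasurableSet (A₁ ∩ B₂)) :
    μ.real (A₂ ∩ B₁) + μ.real (A₁ ∩ B₂) ≤ μ.real (A₂ ∩ B₂) + μ.real (A₁ ∩ B₁) := by
  have hinter : (A₂ ∩ B₁) ∩ (A₁ ∩ B₂) = A₁ ∩ B₁ := by
    ext t
    simp only [mem_inter_iff]
    exact ⟨fun ⟨⟨_, hB₁⟩, hA₁, _⟩ ↦ ⟨hA₁, hB₁⟩, fun ⟨hA₁, hB₁⟩ ↦ ⟨⟨hA hA₁, hB₁⟩, hA₁, hB hB₁⟩⟩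
  have hunion : (A₂ ∩ B₁) ∪ (A₁ ∩ B₂) ⊆ A₂ ∩ B₂ :=
    union_subset (inter_subset_inter_right _ hB) (inter_subset_inter_left _ hA)
  rw [← measureReal_union_add_inter hmeas, hinter]
  exact add_le_add_left (measureReal_mono hunion) _

theorem unitInterval.Iic_one : Iic (1 : unitInterval) = univ :=
  eq_univ_of_forall unitInterval.le_one

theorem unitInterval.volume_real_Iic (x : unitInterval) : volume.real (Iic x) = x := by
  rw [measureReal_def, unitInterval.volume_Iic, ENNReal.toReal_ofReal x.2.1]

section Ah

variable (h : unitInterval → unitInterval)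

theorem Ah_eq_measureReal (x y : unitInterval) :
    Ah h x y = volume.real (Iic x ∩ h ⁻¹' Iic y) :=
  rfl

theorem Ah_zero_left (y : unitInterval) : Ah h 0 y = 0 := by
  rw [Ah_eq_measureReal]
  refine measureReal_mono_null inter_subset_left ?_
  simp [unitInterval.volume_real_Iic]

theorem Ah_one_right (x : unitInterval) : Ah h x 1 = x := by
  rw [Ah_eq_measureReal, unitInterval.Iic_one, preimage_univ, inter_univ, unitInterval.volume_real_Iic]

variable {h} (hmp : MeasurePreserving h volume volume)
include hmp

theorem Ah_zero_right (x : unitInterval) : Ah h x 0 = 0 := by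
  rw [Ah_eq_measureReal]
  refine measureReal_mono_null inter_subset_right ?_
  simp [hmp.measureReal_preimage measurableSet_Iic.nullMeasurableSet,
    unitInterval.volume_real_Iic]

theorem Ah_one_left (y : unitInterval) : Ah h 1 y = y := by
  rw [Ah_eq_measureReal, unitInterval.Iic_one, univ_inter,
    hmp.measureReal_preimage measurableSet_Iic.nullMeasurableSet, unitInterval.volume_real_Iic]

theorem Ah_two_increasing {x₁ x₂ y₁ y₂ : unitInterval} (hx : x₁ ≤ x₂) (hy : y₁ ≤ y₂) :
    0 ≤ Ah h x₂ y₂ - Ah h x₂ y₁ - Ah h x₁ y₂ + Ah h x₁ y₁ := by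
  have := measureReal_inter_add_inter_le (μ := volume) (Iic_subset_Iic.2 hx)
    (preimage_mono (Iic_subset_Iic.2 hy)) (measurableSet_Iic.inter (hmp.measurable measurableSet_Iic))
  simp only [Ah_eq_measureReal]
  linarith

end Ah

theorem stmt_0_general (h : unitInterval → unitInterval)
    (hmp : MeasurePreserving h volume volume) :
    (∀ x : unitInterval, Ah h x 0 = 0) ∧
    (∀ y : unitInterval, Ah h 0 y = 0) ∧
    (∀ x : unitInterval, Ah h x 1 = (x : ℝ)) ∧
    (∀ y : unitInterval, Ah h 1 y = (y : ℝ)) ∧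
    (∀ x₁ x₂ y₁ y₂ : unitInterval, x₁ ≤ x₂ → y₁ ≤ y₂ →
      0 ≤ Ah h x₂ y₂ - Ah h x₂ y₁ - Ah h x₁ y₂ + Ah h x₁ y₁) :=
  ⟨Ah_zero_right hmp, Ah_zero_left h, Ah_one_right h, Ah_one_left hmp,
    fun _ _ _ _ ↦ Ah_two_increasing hmp⟩

/-- If `h : [0,1] → [0,1]` is a Lebesgue-measure-preserving bijection, then
`A_h` is a bivariate copula: it has the right boundary behaviour and is 2-increasing. -/
theorem stmt_0 (h : unitInterval → unitInterval)
    (hbij : Function.Bijective h)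
    (hmp : MeasurePreserving h volume volume) :
    (∀ x : unitInterval, Ah h x 0 = 0) ∧
    (∀ y : unitInterval, Ah h 0 y = 0) ∧
    (∀ x : unitInterval, Ah h x 1 = (x : ℝ)) ∧
    (∀ y : unitInterval, Ah h 1 y = (y : ℝ)) ∧
    (∀ x₁ x₂ y₁ y₂ : unitInterval, x₁ ≤ x₂ → y₁ ≤ y₂ →
      0 ≤ Ah h x₂ y₂ - Ah h x₂ y₁ - Ah h x₁ y₂ + Ah h x₁ y₁) :=
  stmt_0_general h hmp
end

section
/- Let h : [0,1] → [0,1] be a Lebesgue-measure-preserving bijection with measurable inverse, and define Ω√2 = {(x,y) ∈ [0,1]² : h(x) ≤ y and h⁻¹(y) ≤ x}. Then ∫₀¹ A_h(x, h(x)) dλ(x) = 1/2 − λ₂(Ω√2), where A_h(x,y) = λ({t ∈ [0,x] : h(t) ≤ y}) and λ₂ is two-dimensional Lebesgue measure. -/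
open MeasureTheory Set

lemma unitInterval.volume_singleton (x : unitInterval) :
    volume ({x} : Set unitInterval) = 0 := by
  rw [Measure.Subtype.volume_def,
    Measure.comap_apply _ Subtype.val_injective
      (fun s hs => measurableSet_Icc.subtype_image hs) _ (measurableSet_singleton x)]
  simp

lemma unitInterval.volume_diag :
    volume {p : unitInterval × unitInterval | p.2 = p.1} = 0 := by
  have hm : MeasurableSet {p : unitInterval × unitInterval | p.2 = p.1} := by
    have : {p : unitInterval × unitInterval | p.2 = p.1} =
        {p : unitInterval × unitInterval | p.2 ≤ p.1} ∩ {p | p.1 ≤ p.2} := by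
      ext p; simp [le_antisymm_iff]
    rw [this]
    exact (measurableSet_le measurable_snd measurable_fst).inter
      (measurableSet_le measurable_fst measurable_snd)
  rw [Measure.volume_eq_prod, Measure.prod_apply hm]
  have : ∀ x : unitInterval,
      (Prod.mk x ⁻¹' {p : unitInterval × unitInterval | p.2 = p.1}) = {x} := by
    intro x; ext y; simp [eq_comm]
  simp only [this, unitInterval.volume_singleton, lintegral_zero]

lemma unitInterval.volume_le_half :
    volume {p : unitInterval × unitInterval | p.2 ≤ p.1} = 1 / 2 := by
  set D : Set (unitInterval × unitInterval) := {p | p.2 ≤ p.1} with hD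
  set D' : Set (unitInterval × unitInterval) := {p | p.1 ≤ p.2} with hD'
  have hmD : MeasurableSet D :=
    measurableSet_le (measurable_snd)
      (measurable_fst)
  have hmD' : MeasurableSet D' :=
    measurableSet_le (measurable_fst)
      (measurable_snd)
  have hswap : volume D' = volume D := by
    have h1 : Prod.swap ⁻¹' D = D' := by ext p; simp [hD, hD']
    calc volume D' = volume (Prod.swap ⁻¹' D) := by rw [h1]
    _ = volume D := by
        rw [Measure.volume_eq_prod]
        exact Measure.measurePreserving_swap.measure_preimage hmD.nullMeasurableSet
  have hunion : D ∪ D' = univ := by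
    ext p; simpa [hD, hD'] using le_total p.2 p.1
  have hinter : D ∩ D' ⊆ {p | p.2 = p.1} := by
    intro p hp; exact le_antisymm hp.1 hp.2
  have hi0 : volume (D ∩ D') = 0 :=
    measure_mono_null hinter unitInterval.volume_diag
  have key : volume (D ∪ D') + volume (D ∩ D') = volume D + volume D' :=
    measure_union_add_inter D hmD'
  rw [hunion, hi0, hswap, measure_univ, add_zero] at key
  rw [ENNReal.eq_div_iff (by norm_num) (by norm_num)]
  rw [two_mul]
  exact key.symm

/-- For a measure-preserving bijection `h` of `[0,1]` with measurable inverse `g`,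
`∫₀¹ A_h(x, h x) dλ(x) = 1/2 - λ₂(Ω√2)` where
`Ω√2 = {(x,y) : h x ≤ y, h⁻¹ y ≤ x}`. -/
theorem stmt_2 (h g : unitInterval → unitInterval)
    (hbij : Function.Bijective h)
    (hmp : MeasurePreserving h volume volume)
    (hgl : Function.LeftInverse g h) (hgr : Function.RightInverse g h)
    (hgmeas : Measurable g) :
    ∫ x : unitInterval, Ah h x (h x) =
      1 / 2 - (volume {p : unitInterval × unitInterval | h p.1 ≤ p.2 ∧ g p.2 ≤ p.1}).toReal := by
  have hhm : Measurable h := hmp.measurable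
  set μ : Measure unitInterval := volume with hμ
  set S1 : Set (unitInterval × unitInterval) := {p | p.2 ≤ p.1 ∧ h p.2 ≤ h p.1} with hS1
  set S2 : Set (unitInterval × unitInterval) := {p | p.2 ≤ p.1 ∧ h p.1 ≤ h p.2} with hS2
  set Ω : Set (unitInterval × unitInterval) := {p | h p.1 ≤ p.2 ∧ g p.2 ≤ p.1} with hΩ
  have mle : ∀ (f k : unitInterval × unitInterval → unitInterval), Measurable f →
      Measurable k → MeasurableSet {p | f p ≤ k p} := fun f k hf hk => measurableSet_le hf hk
  have hmS1 : MeasurableSet S1 :=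
    (mle _ _ measurable_snd measurable_fst).inter
      (mle _ _ (hhm.comp measurable_snd) (hhm.comp measurable_fst))
  have hmS2 : MeasurableSet S2 :=
    (mle _ _ measurable_snd measurable_fst).inter
      (mle _ _ (hhm.comp measurable_fst) (hhm.comp measurable_snd))
  have hmΩ : MeasurableSet Ω :=
    (mle _ _ (hhm.comp measurable_fst) measurable_snd).inter
      (mle _ _ (hgmeas.comp measurable_snd) measurable_fst)
  -- Step B : volume Ω = volume S2
  have hΩS2 : volume Ω = volume S2 := by
    have hT : MeasurePreserving (fun p : unitInterval × unitInterval => (p.1, h p.2))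
        (μ.prod μ) (μ.prod μ) := (MeasurePreserving.id μ).prod hmp
    have hpre : (fun p : unitInterval × unitInterval => (p.1, h p.2)) ⁻¹' Ω = S2 := by
      ext p
      simp only [hΩ, hS2, mem_preimage, mem_setOf_eq, hgl p.2]
      tauto
    calc volume Ω = (μ.prod μ) Ω := by rw [← Measure.volume_eq_prod]
    _ = (μ.prod μ) ((fun p : unitInterval × unitInterval => (p.1, h p.2)) ⁻¹' Ω) :=
        (hT.measure_preimage hmΩ.nullMeasurableSet).symm
    _ = (μ.prod μ) S2 := by rw [hpre]
    _ = volume S2 := by rw [← Measure.volume_eq_prod]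
  -- Step A : the integral equals (volume S1).toReal
  have hA : ∫ x : unitInterval, Ah h x (h x) = (volume S1).toReal := by
    have hslice : ∀ x : unitInterval,
        Prod.mk x ⁻¹' S1 = {t : unitInterval | t ≤ x ∧ h t ≤ h x} := by
      intro x; ext t; simp [hS1]
    have h1 : ∀ x : unitInterval, Ah h x (h x) = (μ (Prod.mk x ⁻¹' S1)).toReal := by
      intro x; rw [hslice x]; rfl
    simp_rw [h1]
    rw [integral_toReal ((measurable_measure_prodMk_left hmS1).aemeasurable)
      (Filter.Eventually.of_forall fun x => measure_lt_top _ _)]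
    rw [Measure.volume_eq_prod, Measure.prod_apply hmS1]
  -- Combine : volume S1 + volume S2 = 1/2
  have hunion : S1 ∪ S2 = {p : unitInterval × unitInterval | p.2 ≤ p.1} := by
    ext p
    simp only [hS1, hS2, mem_union, mem_setOf_eq]
    rcases le_total (h p.2) (h p.1) with hc | hc <;> tauto
  have hinter : volume (S1 ∩ S2) = 0 := by
    refine measure_mono_null ?_ unitInterval.volume_diag
    rintro p ⟨⟨-, h1⟩, -, h2⟩
    exact hbij.injective (le_antisymm h1 h2)
  have key : volume S1 + volume S2 = 1 / 2 := by
    have := measure_union_add_inter (μ := volume) S1 hmS2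
    rw [hunion, hinter, unitInterval.volume_le_half, add_zero] at this
    exact this.symm
  rw [hΩS2] at *
  have hfin1 : volume S1 ≠ ⊤ := (measure_lt_top _ _).ne
  have hfin2 : volume S2 ≠ ⊤ := (measure_lt_top _ _).ne
  have hreal : (volume S1).toReal + (volume S2).toReal = 1 / 2 := by
    rw [← ENNReal.toReal_add hfin1 hfin2, key]
    norm_num
  rw [hA]
  linarith
end

section
/- Let h : [0,1] → [0,1] be a Lebesgue-measure-preserving bijection with measurable measure-preserving inverse. Define Ω√2 = {(x,y) ∈ (0,1)² : h(x) ≤ y and h⁻¹(y) ≤ x} and Ω₀ = {(x,y) ∈ (0,1)² : h(x) > y and h⁻¹(y) > x}. Then λ₂(Ω₀) = λ₂(Ω√2). -/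
/-! The map `Ψ (x, y) = (h⁻¹ y, h x)` preserves `λ₂` and pulls `{h x ≤ y, h⁻¹ y ≤ x}` back to
`{y ≤ h x, x ≤ h⁻¹ y}`, which differs from `{y < h x, x < h⁻¹ y}` only on the graphs of `h` and
`h⁻¹`. Graphs of measurable maps are `λ₂`-null, and so is the boundary of the square, so the
constraint `(x, y) ∈ (0,1)²` can be dropped on both sides. -/

open MeasureTheory Set

section GraphNull

variable {α β : Type*} [MeasurableSpace α] [MeasurableSpace β] (μ : Measure α) (ν : Measure β)
  [SFinite ν]

theorem MeasureTheory.Measure.ae_prod_snd_ne [MeasurableEq β] [NullSingletonClass ν] {f : α → β}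
    (hf : Measurable f) : ∀ᵐ p ∂μ.prod ν, p.2 ≠ f p.1 :=
  (Measure.ae_prod_iff_ae_ae
      (measurableSet_eq_fun measurable_snd (hf.comp measurable_fst)).compl).2 <|
    ae_of_all _ fun x => ν.ae_ne (f x)

theorem MeasureTheory.Measure.ae_prod_fst_ne [SFinite μ] [MeasurableEq α] [NullSingletonClass μ]
    {f : β → α} (hf : Measurable f) : ∀ᵐ p ∂μ.prod ν, p.1 ≠ f p.2 :=
  Measure.measurePreserving_swap.quasiMeasurePreserving.ae (ν.ae_prod_snd_ne μ hf)

end GraphNull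

theorem MeasureTheory.measure_setOf_and_of_ae {α : Type*} [MeasurableSpace α] {μ : Measure α}
    {Q P : α → Prop} (hQ : ∀ᵐ x ∂μ, Q x) : μ {x | Q x ∧ P x} = μ {x | P x} :=
  measure_congr <| Filter.eventuallyEq_set.2 <| hQ.mono fun _ hx => and_iff_right hx

namespace unitInterval

theorem ae_pos_lt_one : ∀ᵐ x : unitInterval, 0 < x ∧ x < 1 := by
  filter_upwards [volume.ae_ne 0, volume.ae_ne 1] with x h0 h1
  exact ⟨unitInterval.pos_iff_ne_zero.2 h0, unitInterval.lt_one_iff_ne_one.2 h1⟩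

theorem ae_prod_pos_lt_one :
    ∀ᵐ p : unitInterval × unitInterval, 0 < p.1 ∧ p.1 < 1 ∧ 0 < p.2 ∧ p.2 < 1 := by
  rw [Measure.volume_eq_prod]
  filter_upwards [Measure.quasiMeasurePreserving_fst.ae ae_pos_lt_one,
    Measure.quasiMeasurePreserving_snd.ae ae_pos_lt_one] with p h1 h2
  exact ⟨h1.1, h1.2, h2⟩

end unitInterval

theorem stmt_4_general (h g : unitInterval → unitInterval)
    (hmp : MeasurePreserving h volume volume)
    (hgl : Function.LeftInverse g h) (hgr : Function.RightInverse g h)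
    (hgmp : MeasurePreserving g volume volume) :
    volume {p : unitInterval × unitInterval |
        (0 < p.1 ∧ p.1 < 1 ∧ 0 < p.2 ∧ p.2 < 1) ∧ p.2 < h p.1 ∧ p.1 < g p.2} =
    volume {p : unitInterval × unitInterval |
        (0 < p.1 ∧ p.1 < 1 ∧ 0 < p.2 ∧ p.2 < 1) ∧ h p.1 ≤ p.2 ∧ g p.2 ≤ p.1} := by
  set Ψ : unitInterval × unitInterval → unitInterval × unitInterval := fun p => (g p.2, h p.1)
  have hΨ : MeasurePreserving Ψ volume volume := by
    rw [Measure.volume_eq_prod]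
    exact (hgmp.prod hmp).comp Measure.measurePreserving_swap
  have hB : MeasurableSet {p : unitInterval × unitInterval | h p.1 ≤ p.2 ∧ g p.2 ≤ p.1} :=
    (measurableSet_le (hmp.measurable.comp measurable_fst) measurable_snd).inter
      (measurableSet_le (α := unitInterval) (hgmp.measurable.comp measurable_snd) measurable_fst)
  have hpreimage : Ψ ⁻¹' {p | h p.1 ≤ p.2 ∧ g p.2 ≤ p.1} = {p | p.2 ≤ h p.1 ∧ p.1 ≤ g p.2} := by
    ext p
    simp [Ψ, hgl p.1, hgr p.2]
  have hgraphs : {p : unitInterval × unitInterval | p.2 < h p.1 ∧ p.1 < g p.2} =ᵐ[volume]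
      {p | p.2 ≤ h p.1 ∧ p.1 ≤ g p.2} := by
    rw [Measure.volume_eq_prod, Filter.eventuallyEq_set]
    filter_upwards [volume.ae_prod_snd_ne volume hmp.measurable,
      volume.ae_prod_fst_ne volume hgmp.measurable] with p hh hg
    exact and_congr hh.le_iff_lt.symm hg.le_iff_lt.symm
  rw [measure_setOf_and_of_ae unitInterval.ae_prod_pos_lt_one,
    measure_setOf_and_of_ae unitInterval.ae_prod_pos_lt_one, measure_congr hgraphs, ← hpreimage,
    hΨ.measure_preimage hB.nullMeasurableSet]

/-- For a measure-preserving bijection `h` of `[0,1]` with measurable measure-preserving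
inverse `g`, the sets `Ω√2 = {(x,y) ∈ (0,1)² : h x ≤ y, h⁻¹ y ≤ x}` and
`Ω₀ = {(x,y) ∈ (0,1)² : h x > y, h⁻¹ y > x}` have the same two-dimensional
Lebesgue measure. -/
theorem stmt_4 (h g : unitInterval → unitInterval)
    (hbij : Function.Bijective h)
    (hmp : MeasurePreserving h volume volume)
    (hgl : Function.LeftInverse g h) (hgr : Function.RightInverse g h)
    (hgmeas : Measurable g) (hgmp : MeasurePreserving g volume volume) :
    volume {p : unitInterval × unitInterval |
        (0 < p.1 ∧ p.1 < 1 ∧ 0 < p.2 ∧ p.2 < 1) ∧ p.2 < h p.1 ∧ p.1 < g p.2} =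
    volume {p : unitInterval × unitInterval |
        (0 < p.1 ∧ p.1 < 1 ∧ 0 < p.2 ∧ p.2 < 1) ∧ h p.1 ≤ p.2 ∧ g p.2 ≤ p.1} :=
  stmt_4_general h g hmp hgl hgr hgmp
end

section
/- Let h : [0,1] → [0,1] be a Lebesgue-measure-preserving bijection with measurable measure-preserving inverse, and let A_h(x,y) = λ({t ∈ [0,x] : h(t) ≤ y}). Define Kendall's tau of A_h by τ(A_h) = 4·∫₀¹ A_h(x, h(x)) dλ(x) − 1. Then τ(A_h) = 1 − 4·λ₂(Ω√2), where Ω√2 = {(x,y) ∈ [0,1]² : h(x) ≤ y and h⁻¹(y) ≤ x}. -/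
open MeasureTheory Set

/-- Kendall's tau of a mutually completely dependent copula `A_h`, defined by
`τ(A_h) = 4 ∫₀¹ A_h(x, h x) dλ(x) - 1`, satisfies `τ(A_h) = 1 - 4 λ₂(Ω√2)` where
`Ω√2 = {(x,y) ∈ [0,1]² : h x ≤ y, h⁻¹ y ≤ x}`. -/
theorem stmt_6 (h g : unitInterval → unitInterval)
    (hbij : Function.Bijective h)
    (hmp : MeasurePreserving h volume volume)
    (hgl : Function.LeftInverse g h) (hgr : Function.RightInverse g h)
    (hgmeas : Measurable g) (hgmp : MeasurePreserving g volume volume) :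
    4 * (∫ x : unitInterval, Ah h x (h x)) - 1 =
      1 - 4 * (volume {p : unitInterval × unitInterval | h p.1 ≤ p.2 ∧ g p.2 ≤ p.1}).toReal := by
  have hI : True := trivial
  have hhm : Measurable h := hmp.measurable
  -- the sets
  set S : Set (unitInterval × unitInterval) := {p | p.2 ≤ p.1 ∧ h p.2 ≤ h p.1} with hS
  set Ω' : Set (unitInterval × unitInterval) := {p | p.2 ≤ p.1 ∧ h p.1 ≤ h p.2} with hΩ'
  set T : Set (unitInterval × unitInterval) := {p | p.2 ≤ p.1} with hT
  set Ω : Set (unitInterval × unitInterval) := {p | h p.1 ≤ p.2 ∧ g p.2 ≤ p.1} with hΩ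
  -- measurability
  have mc : Measurable (Subtype.val : unitInterval → ℝ) := measurable_subtype_coe
  have m1 : Measurable fun p : unitInterval × unitInterval => ((h p.1 : ℝ)) :=
    mc.comp (hhm.comp measurable_fst)
  have m2 : Measurable fun p : unitInterval × unitInterval => ((h p.2 : ℝ)) :=
    mc.comp (hhm.comp measurable_snd)
  have m3 : Measurable fun p : unitInterval × unitInterval => ((g p.2 : ℝ)) :=
    mc.comp (hgmeas.comp measurable_snd)
  have m4 : Measurable fun p : unitInterval × unitInterval => ((p.1 : ℝ)) :=
    mc.comp measurable_fst
  have m5 : Measurable fun p : unitInterval × unitInterval => ((p.2 : ℝ)) :=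
    mc.comp measurable_snd
  have hTm : MeasurableSet T := measurableSet_le measurable_snd measurable_fst
  have hSm : MeasurableSet S :=
    hTm.inter (measurableSet_le m2 m1)
  have hΩ'm : MeasurableSet Ω' :=
    hTm.inter (measurableSet_le m1 m2)
  have hΩm : MeasurableSet Ω :=
    (measurableSet_le m1 m5).inter
      (measurableSet_le m3 m4)
  -- step 1 : the integral equals the measure of S
  have hint : ∫ x : unitInterval, Ah h x (h x) = (volume S).toReal := by
    have h1 : volume S = ∫⁻ x : unitInterval, volume {t : unitInterval | t ≤ x ∧ h t ≤ h x} := by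
      rw [Measure.volume_eq_prod _ _, Measure.prod_apply hSm]
      rfl
    rw [h1]
    refine integral_toReal ?_ ?_
    · exact (measurable_measure_prodMk_left hSm).aemeasurable
    · filter_upwards with x
      exact measure_lt_top _ _
  -- the diagonal-type null set
  have hdiag : volume {p : unitInterval × unitInterval | p.1 = p.2} = 0 := by
    rw [Measure.volume_eq_prod _ _, Measure.prod_apply (StronglyMeasurable.measurableSet_eq_fun measurable_fst.stronglyMeasurable measurable_snd.stronglyMeasurable)]
    have : ∀ x : unitInterval, volume (Prod.mk x ⁻¹' {p : unitInterval × unitInterval | p.1 = p.2}) = 0 := by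
      intro x
      have : (Prod.mk x ⁻¹' {p : unitInterval × unitInterval | p.1 = p.2}) = {x} := by
        ext t; simp [eq_comm]
      rw [this, unitInterval.volume_def,
        Measure.comap_apply _ Subtype.val_injective
          (fun s hs =>
            (MeasurableEmbedding.subtype_coe measurableSet_Icc).measurableSet_image.mpr hs)
          _ (measurableSet_singleton x)]
      simp
    simp only [this, lintegral_zero]
  have hhdiag : volume {p : unitInterval × unitInterval | h p.1 = h p.2} = 0 := by
    have hpre : {p : unitInterval × unitInterval | h p.1 = h p.2} =
        (fun p : unitInterval × unitInterval => (h p.1, h p.2)) ⁻¹' {p : unitInterval × unitInterval | p.1 = p.2} := rfl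
    have hmp2 : MeasurePreserving (fun p : unitInterval × unitInterval => (h p.1, h p.2))
        (volume : Measure (unitInterval × unitInterval)) (volume : Measure (unitInterval × unitInterval)) := by
      rw [Measure.volume_eq_prod _ _]
      exact hmp.prod hmp
    rw [hpre, hmp2.measure_preimage
      ((StronglyMeasurable.measurableSet_eq_fun measurable_fst.stronglyMeasurable measurable_snd.stronglyMeasurable).nullMeasurableSet)]
    exact hdiag
  -- S ∪ Ω' = T with null intersection
  have hunion : S ∪ Ω' = T := by
    ext p
    constructor
    · rintro (⟨hp, _⟩ | ⟨hp, _⟩) <;> exact hp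
    · intro hp
      rcases le_total (h p.2) (h p.1) with hle | hle
      · exact Or.inl ⟨hp, hle⟩
      · exact Or.inr ⟨hp, hle⟩
  have hinter : volume (S ∩ Ω') = 0 := by
    refine measure_mono_null ?_ hhdiag
    rintro p ⟨⟨_, h1⟩, ⟨_, h2⟩⟩
    exact le_antisymm h2 h1
  have hSΩ' : volume S + volume Ω' = volume T := by
    have := measure_union_add_inter (μ := (volume : Measure (unitInterval × unitInterval))) S hΩ'm
    rw [hunion, hinter, add_zero] at this
    exact this.symm
  -- volume T = 1/2  (via the swap symmetry)
  have hswapT : volume (Prod.swap ⁻¹' T) = volume T := by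
    have hsw : MeasurePreserving (Prod.swap : unitInterval × unitInterval → unitInterval × unitInterval)
        (volume : Measure (unitInterval × unitInterval)) (volume : Measure (unitInterval × unitInterval)) := by
      rw [Measure.volume_eq_prod _ _]
      exact Measure.measurePreserving_swap
    exact hsw.measure_preimage hTm.nullMeasurableSet
  have hTswap_union : T ∪ Prod.swap ⁻¹' T = univ := by
    ext p
    simp only [mem_union, mem_univ, iff_true, mem_preimage, Prod.fst_swap, Prod.snd_swap]
    exact le_total p.2 p.1
  have hTswap_inter : volume (T ∩ Prod.swap ⁻¹' T) = 0 := by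
    refine measure_mono_null ?_ hdiag
    rintro p ⟨h1, h2⟩
    exact le_antisymm h2 h1
  have h2T : volume T + volume T = 1 := by
    have := measure_union_add_inter (μ := (volume : Measure (unitInterval × unitInterval))) T
      (hTm.preimage measurable_swap)
    rw [hTswap_union, hTswap_inter, add_zero, hswapT, measure_univ] at this
    exact this.symm
  -- volume Ω' = volume Ω
  have hΩΩ' : volume Ω' = volume Ω := by
    have hψ : MeasurePreserving (fun p : unitInterval × unitInterval => (p.1, h p.2))
        (volume : Measure (unitInterval × unitInterval)) (volume : Measure (unitInterval × unitInterval)) := by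
      rw [Measure.volume_eq_prod _ _]
      exact (MeasurePreserving.id _).prod hmp
    have hpre : (fun p : unitInterval × unitInterval => (p.1, h p.2)) ⁻¹' Ω = Ω' := by
      ext p
      simp only [hΩ, hΩ', mem_preimage, mem_setOf_eq, hgl p.2]
      exact and_comm
    rw [← hpre, hψ.measure_preimage hΩm.nullMeasurableSet]
  -- assemble the real arithmetic
  have hne : ∀ s : Set (unitInterval × unitInterval), volume s ≠ ⊤ := fun s => measure_ne_top _ _
  have key : (volume S).toReal + (volume Ω).toReal = 1 / 2 := by
    have e1 : (volume S).toReal + (volume Ω').toReal = (volume T).toReal := by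
      rw [← ENNReal.toReal_add (hne S) (hne Ω'), hSΩ']
    have e2 : (volume T).toReal + (volume T).toReal = 1 := by
      rw [← ENNReal.toReal_add (hne T) (hne T), h2T, ENNReal.toReal_one]
    rw [hΩΩ'] at e1
    linarith
  rw [hint]
  linarith
end

section
/- Let h : [0,1] → [0,1] be a Lebesgue-measure-preserving bijection with measurable measure-preserving inverse. Define ℓ(A_h) = ∫_{(0,1)²} ‖∇A_h(u,v)‖₂ dλ₂(u,v), where ∇A_h(u,v) = (𝟙_{[0,v]}(h(u)), 𝟙_{[0,u]}(h⁻¹(v))) almost everywhere. Then ℓ(A_h) = 1 − (2 − √2)·λ₂(Ω√2), where Ω√2 = {(u,v) ∈ (0,1)² : h(u) ≤ v and h⁻¹(v) ≤ u}. -/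
/-!
For `a, b ∈ {0, 1}` one has `√(a² + b²) = a + b - (2 - √2) a b`, so the integral equals
`λ₂(A) + λ₂(B) - (2 - √2) λ₂(A ∩ B)` with `A = {h u ≤ v}` and `B = {g v ≤ u}`.
Since `h` and `g` preserve `λ`, both `A` and `B` have the measure of the triangle `{u ≤ v}`,
which is `1/2` because it and its mirror image cover the square and meet in the null diagonal.
The boundary of the square is null, so restricting to the open square changes nothing.
-/

open MeasureTheory Set
open scoped unitInterval

namespace unitInterval

lemma ae_pos_and_lt_one : ∀ᵐ x : I, 0 < x ∧ x < 1 := by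
  have hnull : (volume : Measure I) {0, 1} = 0 := (toFinite _).measure_zero _
  filter_upwards [measure_eq_zero_iff_ae_notMem.1 hnull] with x hx
  simp only [mem_insert_iff, mem_singleton_iff, not_or] at hx
  exact ⟨unitInterval.pos_iff_ne_zero.2 hx.1, unitInterval.lt_one_iff_ne_one.2 hx.2⟩

lemma ae_pos_and_lt_one_prod : ∀ᵐ p : I × I, 0 < p.1 ∧ p.1 < 1 ∧ 0 < p.2 ∧ p.2 < 1 := by
  filter_upwards [Measure.quasiMeasurePreserving_fst.ae ae_pos_and_lt_one,
    Measure.quasiMeasurePreserving_snd.ae ae_pos_and_lt_one] with p h1 h2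
  exact ⟨h1.1, h1.2, h2⟩

lemma volume_setOf_fst_le_snd : (volume : Measure (I × I)) {p | p.1 ≤ p.2} = 2⁻¹ := by
  set T : Set (I × I) := {p | p.1 ≤ p.2}
  have hT : MeasurableSet T := measurableSet_le measurable_fst measurable_snd
  have hswap : volume (Prod.swap ⁻¹' T) = volume T :=
    Measure.measurePreserving_swap.measure_preimage hT.nullMeasurableSet
  have hunion : T ∪ Prod.swap ⁻¹' T = univ := by
    ext p
    simpa [T] using le_total p.1 p.2
  have hdiag : volume (T ∩ Prod.swap ⁻¹' T) = 0 := by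
    have hdiag_eq : T ∩ Prod.swap ⁻¹' T = {p | p.1 = p.2} := by
      ext p
      simp [T, le_antisymm_iff]
    rw [hdiag_eq, Measure.volume_eq_prod,
      Measure.prod_apply (measurableSet_eq_fun measurable_fst measurable_snd)]
    simp
  have htwo : 1 = 2 * volume T := by
    simpa [hunion, hdiag, hswap, ← two_mul] using
      measure_union_add_inter (μ := volume) T (hT.preimage measurable_swap)
  exact ENNReal.eq_inv_of_mul_eq_one_left (by rw [mul_comm, htwo])

variable {α : Type*} [MeasurableSpace α] {μ : Measure α} [SFinite μ] {f : α → I}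

lemma measure_setOf_apply_fst_le_snd (hf : MeasurePreserving f μ volume) :
    μ.prod volume {p | f p.1 ≤ p.2} = 2⁻¹ := by
  have hmap : MeasurePreserving (Prod.map f id) (μ.prod volume) (volume.prod volume) :=
    hf.prod (MeasurePreserving.id (volume : Measure I))
  rw [← volume_setOf_fst_le_snd, Measure.volume_eq_prod, ← hmap.measure_preimage
    (measurableSet_le measurable_fst measurable_snd).nullMeasurableSet]
  rfl

lemma measure_setOf_apply_snd_le_fst (hf : MeasurePreserving f μ volume) :
    (volume : Measure I).prod μ {p | f p.2 ≤ p.1} = 2⁻¹ := by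
  rw [← measure_setOf_apply_fst_le_snd hf]
  exact Measure.measurePreserving_swap.measure_preimage
    (measurableSet_le (hf.measurable.comp measurable_fst) measurable_snd).nullMeasurableSet

end unitInterval

lemma sqrt_ite_sq_add_ite_sq (P Q : Prop) [Decidable P] [Decidable Q] :
    √((if P then (1 : ℝ) else 0) ^ 2 + (if Q then 1 else 0) ^ 2) =
      (if P then 1 else 0) + (if Q then 1 else 0) - (2 - √2) * (if P ∧ Q then 1 else 0) := by
  by_cases hP : P <;> by_cases hQ : Q <;> norm_num [hP, hQ]

lemma integral_sqrt_indicator_sq_add {X : Type*} [MeasurableSpace X] (μ : Measure X)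
    [IsFiniteMeasure μ] {A B : Set X} (hA : MeasurableSet A) (hB : MeasurableSet B) :
    ∫ x, √(A.indicator 1 x ^ 2 + B.indicator 1 x ^ 2) ∂μ =
      μ.real A + μ.real B - (2 - √2) * μ.real (A ∩ B) := by
  have hAB := hA.inter hB
  have hind : ∀ {s : Set X}, MeasurableSet s → Integrable (s.indicator (1 : X → ℝ)) μ :=
    fun hs => (integrable_const 1).indicator hs
  have hpt : ∀ x, √(A.indicator 1 x ^ 2 + B.indicator 1 x ^ 2) =
      A.indicator 1 x + B.indicator 1 x - (2 - √2) * (A ∩ B).indicator (1 : X → ℝ) x := by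
    classical
    intro x
    simp only [indicator_apply, Pi.one_apply, mem_inter_iff]
    exact sqrt_ite_sq_add_ite_sq _ _
  simp_rw [hpt]
  rw [integral_sub, integral_add (hind hA) (hind hB), integral_const_mul,
    integral_indicator_one hA, integral_indicator_one hB, integral_indicator_one hAB]
  exacts [(hind hA).add (hind hB), (hind hAB).const_mul _]

theorem stmt_7_general (h g : unitInterval → unitInterval)
    (hmp : MeasurePreserving h volume volume)
    (hgmp : MeasurePreserving g volume volume) :
    (∫ p in {p : unitInterval × unitInterval | 0 < p.1 ∧ p.1 < 1 ∧ 0 < p.2 ∧ p.2 < 1},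
        Real.sqrt ((if h p.1 ≤ p.2 then (1 : ℝ) else 0) ^ 2 +
          (if g p.2 ≤ p.1 then (1 : ℝ) else 0) ^ 2)) =
    1 - (2 - Real.sqrt 2) * (volume {p : unitInterval × unitInterval |
        (0 < p.1 ∧ p.1 < 1 ∧ 0 < p.2 ∧ p.2 < 1) ∧ h p.1 ≤ p.2 ∧ g p.2 ≤ p.1}).toReal := by
  set S : Set (I × I) := {p | 0 < p.1 ∧ p.1 < 1 ∧ 0 < p.2 ∧ p.2 < 1}
  set A : Set (I × I) := {p | h p.1 ≤ p.2}
  set B : Set (I × I) := {p | g p.2 ≤ p.1}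
  have hA : MeasurableSet A := measurableSet_le (hmp.measurable.comp measurable_fst) measurable_snd
  have hB : MeasurableSet B := measurableSet_le (hgmp.measurable.comp measurable_snd) measurable_fst
  have hvolA : volume.real A = 2⁻¹ := by
    simp [measureReal_def, Measure.volume_eq_prod, A,
      unitInterval.measure_setOf_apply_fst_le_snd hmp]
  have hvolB : volume.real B = 2⁻¹ := by
    simp [measureReal_def, Measure.volume_eq_prod, B,
      unitInterval.measure_setOf_apply_snd_le_fst hgmp]
  have hS : ∀ᵐ p : I × I, p ∈ S := unitInterval.ae_pos_and_lt_one_prod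
  have hintegrand : (fun p : I × I => √((if h p.1 ≤ p.2 then (1 : ℝ) else 0) ^ 2 +
      (if g p.2 ≤ p.1 then 1 else 0) ^ 2)) =
      fun p => √(A.indicator 1 p ^ 2 + B.indicator 1 p ^ 2) := by
    ext p
    simp [A, B, indicator_apply]
  have hvolAB : volume {p : I × I |
      (0 < p.1 ∧ p.1 < 1 ∧ 0 < p.2 ∧ p.2 < 1) ∧ h p.1 ≤ p.2 ∧ g p.2 ≤ p.1} = volume (A ∩ B) :=
    calc _ = volume (A ∩ B ∩ S) := by
          congr 1
          ext p
          simp only [mem_ofPred_eq, mem_inter_iff, A, B, S]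
          tauto
      _ = volume (A ∩ B) := measure_inter_conull (ae_iff.1 hS)
  rw [Measure.restrict_eq_self_of_ae_mem hS, hintegrand, integral_sqrt_indicator_sq_add _ hA hB,
    hvolA, hvolB, hvolAB, measureReal_def]
  norm_num

/-- For a measure-preserving bijection `h` of `[0,1]` with measurable measure-preserving
inverse `g`, the length measure of the mutually completely dependent copula `A_h`,
`ℓ(A_h) = ∫_{(0,1)²} ‖∇A_h‖₂ dλ₂` with
`∇A_h(u,v) = (𝟙_{[0,v]}(h u), 𝟙_{[0,u]}(h⁻¹ v))` a.e., satisfies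
`ℓ(A_h) = 1 - (2 - √2) λ₂(Ω√2)`. -/
theorem stmt_7 (h g : unitInterval → unitInterval)
    (hbij : Function.Bijective h)
    (hmp : MeasurePreserving h volume volume)
    (hgl : Function.LeftInverse g h) (hgr : Function.RightInverse g h)
    (hgmeas : Measurable g) (hgmp : MeasurePreserving g volume volume) :
    (∫ p in {p : unitInterval × unitInterval | 0 < p.1 ∧ p.1 < 1 ∧ 0 < p.2 ∧ p.2 < 1},
        Real.sqrt ((if h p.1 ≤ p.2 then (1 : ℝ) else 0) ^ 2 +
          (if g p.2 ≤ p.1 then (1 : ℝ) else 0) ^ 2)) =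
    1 - (2 - Real.sqrt 2) * (volume {p : unitInterval × unitInterval |
        (0 < p.1 ∧ p.1 < 1 ∧ 0 < p.2 ∧ p.2 < 1) ∧ h p.1 ≤ p.2 ∧ g p.2 ≤ p.1}).toReal :=
  stmt_7_general h g hmp hgmp
end

section
/- Let h : [0,1] → [0,1] be a Lebesgue-measure-preserving bijection with measurable measure-preserving inverse. Then ∫_{[0,1]²} √(𝟙_{[0,y]}(h(x)) + 𝟙_{[0,x]}(h⁻¹(y)) + 1) dλ₂(x,y) = √2 − (2√2 − 1 − √3)·λ₂(Ω√2), where Ω√2 = {(x,y) ∈ (0,1)² : h(x) ≤ y and h⁻¹(y) ≤ x}. -/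
/-!
The integrand equals `1`, `√2` or `√3` according as neither, one or both of the events
`A = {h x ≤ y}` and `B = {g y ≤ x}` occur, so the integral is
`1 + (√2 - 1)(λ₂ A + λ₂ B) + (√3 - 2√2 + 1) λ₂ (A ∩ B)`. As `h` preserves Lebesgue measure, so
does `(x, y) ↦ (h x, y)`, which pulls the half-square `{x ≤ y}` back to `A`; hence `λ₂ A = 1/2`,
and likewise `λ₂ B = 1/2` since `g` preserves measure. Finally `Ω√2` differs from `A ∩ B`
only on the boundary of the square, a null set.
-/

open MeasureTheory Set

namespace MeasureTheory

section DiagonalHalf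

variable {α β : Type*} [MeasurableSpace α] [MeasurableSpace β]

lemma measure_diagonal_eq_zero [MeasurableEq α] (μ ν : Measure α) [SFinite ν]
    [NullSingletonClass ν] : (μ.prod ν) (diagonal α) = 0 := by
  have slice (x : α) : Prod.mk x ⁻¹' diagonal α = {x} := by ext; simp [eq_comm]
  simp [Measure.prod_apply measurableSet_diagonal, slice]

variable [TopologicalSpace α] [LinearOrder α] [OrderClosedTopology α] [SecondCountableTopology α]
  [OpensMeasurableSpace α] (μ : Measure α) [IsProbabilityMeasure μ] [NullSingletonClass μ]

-- The regions above and below the diagonal are swapped by `Prod.swap` and overlap in a null set.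
lemma prod_measure_fst_le_snd : (μ.prod μ) {p | p.1 ≤ p.2} = 2⁻¹ := by
  have hswap : (μ.prod μ) {p | p.2 ≤ p.1} = (μ.prod μ) {p | p.1 ≤ p.2} :=
    Measure.measurePreserving_swap.measure_preimage measurableSet_le'.nullMeasurableSet
  have hsum := measure_union_add_inter (μ := μ.prod μ) {p : α × α | p.1 ≤ p.2}
    (measurableSet_le measurable_snd measurable_fst)
  have hunion : {p : α × α | p.1 ≤ p.2} ∪ {p | p.2 ≤ p.1} = univ := by
    ext p; simp [le_total]
  have hinter : {p : α × α | p.1 ≤ p.2} ∩ {p | p.2 ≤ p.1} = diagonal α := by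
    ext p; simp [le_antisymm_iff]
  rw [hunion, hinter, measure_univ, measure_diagonal_eq_zero, add_zero, hswap, ← two_mul] at hsum
  exact ENNReal.eq_inv_of_mul_eq_one_left (by rw [mul_comm, hsum])

variable {ν : Measure β} [SFinite ν] {f : β → α}

lemma MeasurePreserving.prod_measure_comp_fst_le_snd (hf : MeasurePreserving f ν μ) :
    (ν.prod μ) {p | f p.1 ≤ p.2} = 2⁻¹ := by
  rw [← prod_measure_fst_le_snd μ]
  exact (hf.prod (MeasurePreserving.id μ)).measure_preimage measurableSet_le'.nullMeasurableSet

lemma MeasurePreserving.prod_measure_comp_snd_le_fst (hf : MeasurePreserving f ν μ) :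
    (μ.prod ν) {p | f p.2 ≤ p.1} = 2⁻¹ := by
  rw [← hf.prod_measure_comp_fst_le_snd μ]
  exact Measure.measurePreserving_swap.measure_preimage
    (measurableSet_le (hf.measurable.comp measurable_fst) measurable_snd).nullMeasurableSet

end DiagonalHalf

section IndicatorSum

variable {Ω : Type*} {A B : Set Ω}

lemma comp_indicator_add_indicator (φ : ℝ → ℝ) (x : Ω) :
    φ (A.indicator 1 x + B.indicator 1 x) =
      φ 0 + (φ 1 - φ 0) * (A.indicator 1 x + B.indicator 1 x)
        + (φ 2 - 2 * φ 1 + φ 0) * (A ∩ B).indicator 1 x := by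
  by_cases hA : x ∈ A <;> by_cases hB : x ∈ B <;> simp [hA, hB]; norm_num; ring

variable [MeasurableSpace Ω] {μ : Measure Ω}

lemma integral_comp_indicator_add_indicator [IsFiniteMeasure μ] (hA : MeasurableSet A)
    (hB : MeasurableSet B) (φ : ℝ → ℝ) :
    ∫ x, φ (A.indicator 1 x + B.indicator 1 x) ∂μ =
      φ 0 * μ.real univ + (φ 1 - φ 0) * (μ.real A + μ.real B)
        + (φ 2 - 2 * φ 1 + φ 0) * μ.real (A ∩ B) := by
  have iA : Integrable (A.indicator 1) μ := (integrable_const (1 : ℝ)).indicator hA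
  have iB : Integrable (B.indicator 1) μ := (integrable_const (1 : ℝ)).indicator hB
  have iAB : Integrable ((A ∩ B).indicator 1) μ :=
    (integrable_const (1 : ℝ)).indicator (hA.inter hB)
  have iSum : Integrable (fun x => (φ 1 - φ 0) * (A.indicator 1 x + B.indicator 1 x)) μ :=
    (iA.add iB).const_mul _
  have iAffine : Integrable
      (fun x => φ 0 + (φ 1 - φ 0) * (A.indicator 1 x + B.indicator 1 x)) μ :=
    (integrable_const _).add iSum
  simp_rw [comp_indicator_add_indicator (A := A) (B := B) φ]
  rw [integral_add iAffine (iAB.const_mul _),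
    integral_add (integrable_const _) iSum, integral_const_mul, integral_const_mul,
    integral_add iA iB, integral_indicator_one hA, integral_indicator_one hB,
    integral_indicator_one (hA.inter hB), integral_const, smul_eq_mul, mul_comm (μ.real univ)]

end IndicatorSum

end MeasureTheory

lemma unitInterval.ae_pos_lt_one_s8 : ∀ᵐ x : unitInterval, 0 < x ∧ x < 1 := by
  filter_upwards [Measure.ae_ne volume 0, Measure.ae_ne volume 1] with x h0 h1
  exact ⟨unitInterval.pos_iff_ne_zero.2 h0, unitInterval.lt_one_iff_ne_one.2 h1⟩

theorem stmt_8_general (h g : unitInterval → unitInterval)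
    (hmp : MeasurePreserving h volume volume)
    (hgmp : MeasurePreserving g volume volume) :
    (∫ p : unitInterval × unitInterval,
        Real.sqrt ((if h p.1 ≤ p.2 then (1 : ℝ) else 0) +
          (if g p.2 ≤ p.1 then (1 : ℝ) else 0) + 1)) =
    Real.sqrt 2 - (2 * Real.sqrt 2 - 1 - Real.sqrt 3) *
      (volume {p : unitInterval × unitInterval |
        (0 < p.1 ∧ p.1 < 1 ∧ 0 < p.2 ∧ p.2 < 1) ∧ h p.1 ≤ p.2 ∧ g p.2 ≤ p.1}).toReal := by
  set A : Set (unitInterval × unitInterval) := {p | h p.1 ≤ p.2}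
  set B : Set (unitInterval × unitInterval) := {p | g p.2 ≤ p.1}
  have hA : MeasurableSet A := measurableSet_le (hmp.measurable.comp measurable_fst) measurable_snd
  have hB : MeasurableSet B := measurableSet_le (hgmp.measurable.comp measurable_snd) measurable_fst
  have hμA : volume.real A = 2⁻¹ := by
    simp [measureReal_def, A, Measure.volume_eq_prod, hmp.prod_measure_comp_fst_le_snd]
  have hμB : volume.real B = 2⁻¹ := by
    simp [measureReal_def, B, Measure.volume_eq_prod, hgmp.prod_measure_comp_snd_le_fst]
  have hinterior : ∀ᵐ p : unitInterval × unitInterval ∂volume,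
      0 < p.1 ∧ p.1 < 1 ∧ 0 < p.2 ∧ p.2 < 1 := by
    filter_upwards [Measure.quasiMeasurePreserving_fst.ae unitInterval.ae_pos_lt_one_s8,
      Measure.quasiMeasurePreserving_snd.ae unitInterval.ae_pos_lt_one_s8] with p h1 h2
    exact ⟨h1.1, h1.2, h2.1, h2.2⟩
  have hΩ : {p : unitInterval × unitInterval |
      (0 < p.1 ∧ p.1 < 1 ∧ 0 < p.2 ∧ p.2 < 1) ∧ h p.1 ≤ p.2 ∧ g p.2 ≤ p.1}
        =ᵐ[volume] (A ∩ B : Set _) :=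
    inter_ae_eq_right_of_ae_eq_univ (ae_eq_univ.2 (ae_iff.1 hinterior))
  have hintegrand : ∀ p : unitInterval × unitInterval,
      Real.sqrt ((if h p.1 ≤ p.2 then (1 : ℝ) else 0) + (if g p.2 ≤ p.1 then (1 : ℝ) else 0) + 1)
        = Real.sqrt (A.indicator 1 p + B.indicator 1 p + 1) := by
    intro p; simp [Set.indicator_apply, A, B]
  rw [integral_congr_ae (.of_forall hintegrand),
    integral_comp_indicator_add_indicator hA hB (fun t => Real.sqrt (t + 1)), ← measureReal_def,
    measureReal_congr hΩ, hμA, hμB]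
  norm_num
  ring

/-- For a measure-preserving bijection `h` of `[0,1]` with measurable measure-preserving
inverse `g`, the surface area of the mutually completely dependent copula `A_h`,
`∫_{[0,1]²} √(𝟙_{[0,y]}(h x) + 𝟙_{[0,x]}(h⁻¹ y) + 1) dλ₂`, equals
`√2 - (2√2 - 1 - √3) λ₂(Ω√2)`. -/
theorem stmt_8 (h g : unitInterval → unitInterval)
    (hbij : Function.Bijective h)
    (hmp : MeasurePreserving h volume volume)
    (hgl : Function.LeftInverse g h) (hgr : Function.RightInverse g h)
    (hgmeas : Measurable g) (hgmp : MeasurePreserving g volume volume) :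
    (∫ p : unitInterval × unitInterval,
        Real.sqrt ((if h p.1 ≤ p.2 then (1 : ℝ) else 0) +
          (if g p.2 ≤ p.1 then (1 : ℝ) else 0) + 1)) =
    Real.sqrt 2 - (2 * Real.sqrt 2 - 1 - Real.sqrt 3) *
      (volume {p : unitInterval × unitInterval |
        (0 < p.1 ∧ p.1 < 1 ∧ 0 < p.2 ∧ p.2 < 1) ∧ h p.1 ≤ p.2 ∧ g p.2 ≤ p.1}).toReal :=
  stmt_8_general h g hmp hgmp
end

section
/- Let h : [0,1] → [0,1] be a Lebesgue-measure-preserving bijection with measurable inverse. Then ω := λ₂({(x,y) ∈ (0,1)² : h(x) ≤ y, h⁻¹(y) ≤ x}) satisfies 0 ≤ ω ≤ 1/2. Consequently the length measure ℓ(A_h) = 1 − (2−√2)ω lies in [1/√2, 1] and the surface area surf(A_h) = √2 − (2√2−1−√3)ω lies in [(1+√3)/2, √2]. -/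
open MeasureTheory Set

/-- For a measure-preserving bijection `h` of `[0,1]` with measurable inverse `g`,
`ω = λ₂(Ω√2)` satisfies `0 ≤ ω ≤ 1/2`; consequently the length measure
`ℓ(A_h) = 1 - (2 - √2)ω` lies in `[1/√2, 1]` and the surface area
`surf(A_h) = √2 - (2√2 - 1 - √3)ω` lies in `[(1 + √3)/2, √2]`. -/
theorem stmt_11 (h g : unitInterval → unitInterval)
    (hbij : Function.Bijective h)
    (hmp : MeasurePreserving h volume volume)
    (hgl : Function.LeftInverse g h) (hgr : Function.RightInverse g h)
    (hgmeas : Measurable g)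
    (ω : ℝ)
    (hω : ω = (volume {p : unitInterval × unitInterval |
        (0 < p.1 ∧ p.1 < 1 ∧ 0 < p.2 ∧ p.2 < 1) ∧ h p.1 ≤ p.2 ∧ g p.2 ≤ p.1}).toReal) :
    (0 ≤ ω ∧ ω ≤ 1 / 2) ∧
    (1 / Real.sqrt 2 ≤ 1 - (2 - Real.sqrt 2) * ω ∧ 1 - (2 - Real.sqrt 2) * ω ≤ 1) ∧
    ((1 + Real.sqrt 3) / 2 ≤ Real.sqrt 2 - (2 * Real.sqrt 2 - 1 - Real.sqrt 3) * ω ∧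
      Real.sqrt 2 - (2 * Real.sqrt 2 - 1 - Real.sqrt 3) * ω ≤ Real.sqrt 2) := by
  have hhm : Measurable h := hmp.measurable
  set e : unitInterval ≃ᵐ unitInterval :=
    { toFun := h, invFun := g, left_inv := hgl, right_inv := hgr,
      measurable_toFun := hhm, measurable_invFun := hgmeas } with he
  have hgmp : MeasurePreserving g volume volume := hmp.symm e
  set S : Set (unitInterval × unitInterval) := {p | h p.1 ≤ p.2 ∧ g p.2 ≤ p.1} with hS
  have hSm : MeasurableSet S := by
    apply MeasurableSet.inter
    · exact measurableSet_le (by fun_prop) (by fun_prop)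
    · exact measurableSet_le (by fun_prop) (by fun_prop)
  set T : unitInterval × unitInterval → unitInterval × unitInterval :=
    fun p => (g p.2, h p.1) with hT
  have hTmp : MeasurePreserving T volume volume := by
    rw [Measure.volume_eq_prod]
    exact (hgmp.prod hmp).comp Measure.measurePreserving_swap
  -- singleton measure zero
  have hsing : ∀ a : unitInterval, volume ({a} : Set unitInterval) = 0 := by
    intro a
    rw [unitInterval.volume_def,
      MeasurableEmbedding.comap_apply (MeasurableEmbedding.subtype_coe measurableSet_Icc)]
    simp
  -- graph is null
  have hGm : MeasurableSet {p : unitInterval × unitInterval | p.2 = h p.1} := by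
    have heq : {p : unitInterval × unitInterval | p.2 = h p.1} =
        (fun p : unitInterval × unitInterval => (p.2, h p.1)) ⁻¹'
          {q : unitInterval × unitInterval | q.1 = q.2} := rfl
    rw [heq]
    exact (measurable_snd.prodMk (hhm.comp measurable_fst))
      (isClosed_eq continuous_fst continuous_snd).measurableSet
  have hgraph : volume {p : unitInterval × unitInterval | p.2 = h p.1} = 0 := by
    rw [Measure.volume_eq_prod, Measure.prod_apply hGm]
    have : ∀ x : unitInterval,
        (Prod.mk x ⁻¹' {p : unitInterval × unitInterval | p.2 = h p.1}) = {h x} := by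
      intro x; ext y; simp [Set.mem_singleton_iff]
    simp only [this, hsing]
    simp
  have hinter : S ∩ T ⁻¹' S ⊆ {p : unitInterval × unitInterval | p.2 = h p.1} := by
    rintro ⟨x, y⟩ ⟨⟨h1, h2⟩, h3, h4⟩
    simp only [hS, hT, Set.mem_preimage, Set.mem_setOf_eq] at h1 h2 h3 h4 ⊢
    rw [hgr y] at h3
    exact le_antisymm h3 h1
  have hpre : volume (T ⁻¹' S) = volume S := hTmp.measure_preimage hSm.nullMeasurableSet
  have hunion : volume S + volume (T ⁻¹' S) ≤ 1 := by
    have key : volume (S ∪ T ⁻¹' S) + volume (S ∩ T ⁻¹' S) = volume S + volume (T ⁻¹' S) :=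
      measure_union_add_inter S (hTmp.measurable hSm)
    have h0 : volume (S ∩ T ⁻¹' S) = 0 := measure_mono_null hinter hgraph
    have h1 : volume (S ∪ T ⁻¹' S) ≤ 1 :=
      le_trans (measure_mono (Set.subset_univ _)) (le_of_eq measure_univ)
    rw [h0, add_zero] at key
    rw [← key]; exact h1
  have hShalf : volume S ≤ 1 / 2 := by
    rw [hpre] at hunion
    rw [ENNReal.le_div_iff_mul_le (by simp) (by simp)]
    calc volume S * 2 = volume S + volume S := by ring
      _ ≤ 1 := hunion
  have hE : {p : unitInterval × unitInterval |
        (0 < p.1 ∧ p.1 < 1 ∧ 0 < p.2 ∧ p.2 < 1) ∧ h p.1 ≤ p.2 ∧ g p.2 ≤ p.1} ⊆ S := by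
    rintro p ⟨_, h1, h2⟩; exact ⟨h1, h2⟩
  have hωle : ω ≤ 1 / 2 := by
    rw [hω]
    have : volume {p : unitInterval × unitInterval |
        (0 < p.1 ∧ p.1 < 1 ∧ 0 < p.2 ∧ p.2 < 1) ∧ h p.1 ≤ p.2 ∧ g p.2 ≤ p.1} ≤ 1 / 2 :=
      le_trans (measure_mono hE) hShalf
    calc (volume {p : unitInterval × unitInterval |
        (0 < p.1 ∧ p.1 < 1 ∧ 0 < p.2 ∧ p.2 < 1) ∧ h p.1 ≤ p.2 ∧ g p.2 ≤ p.1}).toReal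
        ≤ ((1 : ENNReal) / 2).toReal := ENNReal.toReal_mono (by simp) this
      _ = 1 / 2 := by simp
  have hω0 : 0 ≤ ω := hω ▸ ENNReal.toReal_nonneg
  have s2 : Real.sqrt 2 ^ 2 = 2 := Real.sq_sqrt (by norm_num)
  have s3 : Real.sqrt 3 ^ 2 = 3 := Real.sq_sqrt (by norm_num)
  have s2n : (0:ℝ) ≤ Real.sqrt 2 := Real.sqrt_nonneg 2
  have s3n : (0:ℝ) ≤ Real.sqrt 3 := Real.sqrt_nonneg 3
  have h2 : (1.4:ℝ) ≤ Real.sqrt 2 := by nlinarith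
  have h2' : Real.sqrt 2 ≤ 1.5 := by nlinarith
  have h3 : (1.7:ℝ) ≤ Real.sqrt 3 := by nlinarith
  have h3' : Real.sqrt 3 ≤ 1.8 := by nlinarith
  have hinv : 1 / Real.sqrt 2 = Real.sqrt 2 / 2 := by
    rw [div_eq_div_iff (by positivity : Real.sqrt 2 ≠ 0) (by norm_num : (2:ℝ) ≠ 0)]
    nlinarith
  refine ⟨⟨hω0, hωle⟩, ⟨?_, ?_⟩, ?_, ?_⟩
  · rw [hinv]; nlinarith
  · nlinarith
  · nlinarith
  · nlinarith
end

section
/- Let N ≥ 2, π a permutation of {1,…,N}, and let h : [0,1) → [0,1) be a Lebesgue-measure-preserving bijection with measure-preserving inverse. Define H : [0,1) → [0,1) by H(x) = (π(i) − 1)/N + h(N·x − (i−1))/N for x ∈ [(i−1)/N, i/N). Then H is a measure-preserving bijection and λ₂(Ω√2^H) = λ₂(Ω√2^{h_π}) + (1/N)·λ₂(Ω√2^h), where for any measure-preserving bijection g, Ω√2^g = {(x,y) ∈ (0,1)² : g(x) ≤ y, g⁻¹(y) ≤ x}, and h_π is the straight shuffle h_π(x) = x − (i−1)/N + (π(i)−1)/N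 on [(i−1)/N, i/N). -/
/-!
Identify `[0,1)` with `Fin N × [0,1)` through `(i, t) ↦ (i + t) / N`; this carries the uniform
measure on `Fin N` times Lebesgue measure to Lebesgue measure. In these coordinates `H` and `G`
become `π × h` and `π⁻¹ × g`, so `H` is a measure-preserving bijection with inverse `G`.
Comparing points lexicographically, `{H x ≤ y, G y ≤ x}` splits into the off-diagonal blocks
`{π i < j, π⁻¹ j < i}`, which depend on `π` alone, and the blocks `j = π i`, each carrying a copy
of `{h s ≤ t, g t ≤ s}` scaled by `1 / N²`. The straight shuffle is the case `h = id`, where the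
copies lie on the null diagonal; the positivity constraints in `Ω√2` only remove a null set.
-/

open MeasureTheory Set

attribute [local instance] MeasureTheory.Measure.Subtype.measureSpace

/-- For a measure-preserving bijection `f` of `[0,1)` with inverse `finv`, the set
`Ω√2^f = {(x,y) ∈ (0,1)² : f x ≤ y, f⁻¹ y ≤ x}`. -/
def OmegaSqrtTwo (f finv : Ico (0:ℝ) 1 → Ico (0:ℝ) 1) :
    Set (Ico (0:ℝ) 1 × Ico (0:ℝ) 1) :=
  {p | (0 < (p.1 : ℝ) ∧ (p.1 : ℝ) < 1 ∧ 0 < (p.2 : ℝ) ∧ (p.2 : ℝ) < 1) ∧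
    f p.1 ≤ p.2 ∧ finv p.2 ≤ p.1}

open ProbabilityTheory Function
open scoped ENNReal

lemma map_volume_affine {a : ℝ} (ha : 0 < a) (b : ℝ) :
    Measure.map (fun u => (b + u) / a) volume = ENNReal.ofReal a • volume := by
  have hcomp : (fun u : ℝ => (b + u) / a) = (a⁻¹ * ·) ∘ (b + ·) := by
    funext u; simp only [Function.comp, div_eq_inv_mul]
  rw [hcomp, ← Measure.map_map (measurable_const_mul _) (measurable_const_add _),
    map_add_left_eq_self, Real.map_volume_mul_left (inv_ne_zero ha.ne'), inv_inv,
    abs_of_pos ha]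

lemma map_volume_restrict_affine {a : ℝ} (ha : 0 < a) (b : ℝ) :
    Measure.map (fun u => (b + u) / a) (volume.restrict (Ico 0 1)) =
      ENNReal.ofReal a • volume.restrict (Ico (b / a) ((b + 1) / a)) := by
  have hpre : (fun u : ℝ => (b + u) / a) ⁻¹' Ico (b / a) ((b + 1) / a) = Ico 0 1 := by
    ext u
    simp only [mem_preimage, mem_Ico, div_le_div_iff_of_pos_right ha,
      div_lt_div_iff_of_pos_right ha, le_add_iff_nonneg_right, add_lt_add_iff_left]
  rw [← hpre, ← Measure.restrict_map (by fun_prop) measurableSet_Ico, map_volume_affine ha,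
    Measure.restrict_smul]

lemma map_perm_uniformOn_univ {α : Type*} [Fintype α] [MeasurableSpace α]
    [DiscreteMeasurableSpace α] (σ : Equiv.Perm α) :
    Measure.map σ (uniformOn (univ : Set α)) = uniformOn univ := by
  ext s hs
  rw [Measure.map_apply (measurable_of_finite σ) hs, uniformOn_univ, uniformOn_univ,
    ← Equiv.image_symm_eq_preimage, Measure.count_injective_image' σ.symm.injective hs .of_discrete]

lemma uniformOn_univ_singleton {α : Type*} [Fintype α] [MeasurableSpace α]
    [MeasurableSingletonClass α] (a : α) :
    uniformOn (univ : Set α) {a} = (Fintype.card α : ℝ≥0∞)⁻¹ := by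
  rw [uniformOn_univ, Measure.count_singleton, one_div]

lemma leftInverse_of_semiconj {α β : Type*} (e : α ≃ β) {F F' : α → α} {H G : β → β}
    (hH : Semiconj e F H) (hG : Semiconj e F' G) (hF : LeftInverse F' F) : LeftInverse G H := by
  intro x
  obtain ⟨a, rfl⟩ := e.surjective x
  rw [← hH, ← hG, hF]

lemma measurePreserving_of_semiconj {α β : Type*} [MeasurableSpace α] [MeasurableSpace β]
    {μ : Measure α} {ν : Measure β} (e : α ≃ᵐ β) (he : MeasurePreserving e μ ν) {F : α → α}
    {H : β → β} (hF : MeasurePreserving F μ μ) (hH : Semiconj e F H) :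
    MeasurePreserving H ν ν := by
  have : H = e ∘ F ∘ e.symm := funext fun x => by simpa using (hH (e.symm x)).symm
  rw [this]
  exact he.comp (hF.comp (he.symm e))

namespace IcoShuffle

abbrev UnitIco : Type := Ico (0:ℝ) 1

lemma volume_unitIco_apply (s : Set UnitIco) : volume s = volume ((↑) '' s : Set ℝ) :=
  (MeasurableEmbedding.subtype_coe measurableSet_Ico).comap_apply volume s

instance : IsProbabilityMeasure (volume : Measure UnitIco) :=
  ⟨by rw [volume_unitIco_apply, image_univ, Subtype.range_coe]; simp⟩

instance : NullSingletonClass (volume : Measure UnitIco) :=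
  ⟨fun x => by rw [volume_unitIco_apply]; simp⟩

lemma map_coe_volume_unitIco :
    Measure.map ((↑) : UnitIco → ℝ) volume = volume.restrict (Ico 0 1) :=
  map_comap_subtype_coe measurableSet_Ico volume

def omegaCore (f finv : UnitIco → UnitIco) : Set (UnitIco × UnitIco) :=
  {p | f p.1 ≤ p.2 ∧ finv p.2 ≤ p.1}

lemma measurableSet_omegaCore {f finv : UnitIco → UnitIco} (hf : Measurable f)
    (hfinv : Measurable finv) : MeasurableSet (omegaCore f finv) :=
  (measurableSet_le (hf.comp measurable_fst) measurable_snd).inter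
    (measurableSet_le (f := fun p : UnitIco × UnitIco => finv p.2) (hfinv.comp measurable_snd)
      measurable_fst)

lemma omegaSqrtTwo_eq_inter (f finv : UnitIco → UnitIco) :
    OmegaSqrtTwo f finv = omegaCore f finv ∩ ({0}ᶜ ×ˢ {0}ᶜ) := by
  have hpos : ∀ x : UnitIco, (0 < (x : ℝ) ∧ (x : ℝ) < 1) ↔ x ∈ ({0}ᶜ : Set UnitIco) := fun x => by
    simp only [mem_compl_iff, mem_singleton_iff, ← Set.Ico.coe_ne_zero, x.2.2, and_true]
    exact ⟨ne_of_gt, x.2.1.lt_of_ne'⟩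
  ext p
  simp only [OmegaSqrtTwo, omegaCore, mem_ofPred_eq, mem_inter_iff, mem_prod, ← hpos]
  tauto

lemma volume_omegaSqrtTwo (f finv : UnitIco → UnitIco) :
    volume (OmegaSqrtTwo f finv) = volume (omegaCore f finv) := by
  rw [omegaSqrtTwo_eq_inter]
  refine measure_inter_conull ?_
  rw [compl_prod_eq_union, compl_compl, measure_union_null_iff, Measure.volume_eq_prod,
    Measure.prod_prod, Measure.prod_prod, measure_singleton]
  simp

lemma volume_omegaCore_id : volume (omegaCore (id : UnitIco → UnitIco) id) = 0 := by
  have hdiag : MeasurableSet {p : UnitIco × UnitIco | p.1 = p.2} :=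
    measurableSet_eq_fun measurable_fst measurable_snd
  refine measure_mono_null (t := {p : UnitIco × UnitIco | p.1 = p.2})
    (fun p hp => le_antisymm hp.1 hp.2) ?_
  rw [Measure.volume_eq_prod, Measure.prod_apply hdiag]
  simp [preimage]

noncomputable section

def block (N i : ℕ) : Set ℝ := Ico ((i : ℝ) / N) ((i + 1) / N)

def blockMeasure (N : ℕ) : Measure (Fin N × UnitIco) := (uniformOn univ).prod volume

variable {N : ℕ}

instance [NeZero N] : IsProbabilityMeasure (blockMeasure N) := by
  unfold blockMeasure; infer_instance

lemma measurePreserving_prodMap (π : Equiv.Perm (Fin N)) {h : UnitIco → UnitIco}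
    (hh : MeasurePreserving h volume volume) :
    MeasurePreserving (Prod.map π h) (blockMeasure N) (blockMeasure N) :=
  MeasurePreserving.prod ⟨measurable_of_finite π, map_perm_uniformOn_univ π⟩ hh

def shuffleOff (π : Equiv.Perm (Fin N)) : Set ((Fin N × UnitIco) × (Fin N × UnitIco)) :=
  {p | π p.1.1 < p.2.1 ∧ π.symm p.2.1 < p.1.1}

def shuffleDiag (π : Equiv.Perm (Fin N)) (h g : UnitIco → UnitIco) :
    Set ((Fin N × UnitIco) × (Fin N × UnitIco)) :=
  {p | p.2.1 = π p.1.1 ∧ (p.1.2, p.2.2) ∈ omegaCore h g}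

lemma measurableSet_shuffleDiag (π : Equiv.Perm (Fin N)) {h g : UnitIco → UnitIco}
    (hh : Measurable h) (hg : Measurable g) :
    MeasurableSet (shuffleDiag π h g) :=
  (measurableSet_eq_fun (by fun_prop) (by fun_prop)).inter
    ((measurable_fst.snd.prodMk measurable_snd.snd) (measurableSet_omegaCore hh hg))

variable [NeZero N]

lemma natCast_pos_real : (0:ℝ) < N := Nat.cast_pos.mpr (NeZero.pos N)

def blockEmbed (p : Fin N × UnitIco) : UnitIco :=
  ⟨(p.1 + p.2) / N, by
    have hN := natCast_pos_real (N := N)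
    have hi : (p.1 : ℝ) + 1 ≤ N := by exact_mod_cast p.1.is_lt
    exact ⟨by have := p.2.2.1; positivity, (div_lt_one hN).2 (by linarith [p.2.2.2])⟩⟩

lemma floor_mul_lt (x : UnitIco) : ⌊(N : ℝ) * x⌋₊ < N :=
  (Nat.floor_lt (by have := x.2.1; positivity)).2 (mul_lt_of_lt_one_right natCast_pos_real x.2.2)

def blockIndex (x : UnitIco) : Fin N := ⟨⌊(N : ℝ) * x⌋₊, floor_mul_lt x⟩

def blockOffset (x : UnitIco) : UnitIco :=
  ⟨N * x - ⌊(N : ℝ) * x⌋₊, by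
    have h0 : 0 ≤ (N : ℝ) * x := by have := x.2.1; positivity
    exact ⟨sub_nonneg.2 (Nat.floor_le h0), by linarith [Nat.lt_floor_add_one ((N : ℝ) * x)]⟩⟩

lemma measurable_blockIndex : Measurable (blockIndex (N := N)) := by
  refine measurable_to_countable' fun i => ?_
  have : blockIndex ⁻¹' {i} = (fun x : UnitIco => ⌊(N : ℝ) * x⌋₊) ⁻¹' {(i : ℕ)} := by
    ext x; simp [blockIndex, Fin.ext_iff]
  rw [this]
  exact (Nat.measurable_floor.comp (by fun_prop)) (measurableSet_singleton _)

def blockEquiv : Fin N × UnitIco ≃ᵐ UnitIco where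
  toFun := blockEmbed
  invFun x := (blockIndex x, blockOffset x)
  left_inv := by
    rintro ⟨i, t⟩
    have hN := natCast_pos_real (N := N)
    have key : (N : ℝ) * ((i + t) / N) = t + i := by field_simp; ring
    have hfl : ⌊(N : ℝ) * ((i + t) / N)⌋₊ = i := by
      rw [key, Nat.floor_add_natCast t.2.1, Nat.floor_eq_zero.2 t.2.2, zero_add]
    ext
    · exact hfl
    · change (N : ℝ) * ((i + t) / N) - ⌊(N : ℝ) * ((i + t) / N)⌋₊ = t
      rw [hfl, key]; ring
  right_inv x := by
    have hN := natCast_pos_real (N := N)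
    ext
    simp only [blockEmbed, blockIndex, blockOffset]
    field_simp
    ring
  measurable_toFun := Measurable.subtype_mk (by fun_prop)
  measurable_invFun := measurable_blockIndex.prodMk (Measurable.subtype_mk (by fun_prop))

lemma blockEquiv_coe (p : Fin N × UnitIco) : (blockEquiv p : ℝ) = (p.1 + p.2) / N := rfl

lemma strictMono_blockEquiv :
    StrictMono fun p : Lex (Fin N × UnitIco) => blockEquiv (ofLex p) := by
  intro p q hlt
  have hN := natCast_pos_real (N := N)
  rw [← Subtype.coe_lt_coe, blockEquiv_coe, blockEquiv_coe, div_lt_div_iff_of_pos_right hN]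
  rcases Prod.Lex.lt_iff.1 hlt with hij | ⟨hij, hst⟩
  · have : ((ofLex p).1 : ℝ) + 1 ≤ (ofLex q).1 := by exact_mod_cast hij
    linarith [(ofLex p).2.2.2, (ofLex q).2.2.1]
  · rw [hij]
    exact add_lt_add_right (Subtype.coe_lt_coe.2 hst) _

lemma blockEquiv_le_blockEquiv {p q : Fin N × UnitIco} :
    blockEquiv p ≤ blockEquiv q ↔ p.1 < q.1 ∨ p.1 = q.1 ∧ p.2 ≤ q.2 :=
  strictMono_blockEquiv.le_iff_le.trans Prod.Lex.toLex_le_toLex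

lemma mem_block_iff {x : ℝ} (hx : 0 ≤ x) (i : ℕ) : x ∈ block N i ↔ ⌊(N : ℝ) * x⌋₊ = i := by
  have hN := natCast_pos_real (N := N)
  rw [Nat.floor_eq_iff (by positivity), block, mem_Ico, div_le_iff₀ hN, lt_div_iff₀ hN, mul_comm x]

lemma pairwise_disjoint_block : Pairwise (Function.onFun Disjoint fun i : Fin N => block N i) := by
  refine fun i j hij => Set.disjoint_left.2 fun x hi hj => hij (Fin.ext ?_)
  have hx : 0 ≤ x := le_trans (by positivity) (mem_Ico.1 hi).1
  rw [← (mem_block_iff hx i).1 hi, (mem_block_iff hx j).1 hj]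

lemma iUnion_block : ⋃ i : Fin N, block N i = Ico 0 1 := by
  have hN := natCast_pos_real (N := N)
  ext x
  simp only [mem_iUnion, block]
  constructor
  · rintro ⟨i, hi⟩
    have hiN : (i : ℝ) + 1 ≤ N := by exact_mod_cast i.is_lt
    exact ⟨le_trans (by positivity) hi.1, hi.2.trans_le ((div_le_one hN).2 hiN)⟩
  · intro hx
    exact ⟨blockIndex (⟨x, hx⟩ : UnitIco), (mem_block_iff hx.1 _).2 rfl⟩

lemma map_blockEquiv_mk (i : Fin N) :
    Measure.map (fun t => (blockEquiv (i, t) : ℝ)) volume =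
      (N : ℝ≥0∞) • volume.restrict (block N i) := by
  have : (fun t : UnitIco => (blockEquiv (i, t) : ℝ)) =
      (fun u : ℝ => ((i : ℕ) + u) / N) ∘ (↑) := rfl
  rw [this, ← Measure.map_map (by fun_prop) measurable_subtype_coe, map_coe_volume_unitIco,
    map_volume_restrict_affine natCast_pos_real, ENNReal.ofReal_natCast]
  rfl

lemma map_coe_blockEquiv :
    Measure.map (fun p => (blockEquiv p : ℝ)) (blockMeasure N) = volume.restrict (Ico 0 1) := by
  have hm : Measurable fun p : Fin N × UnitIco => (blockEquiv p : ℝ) :=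
    measurable_subtype_coe.comp blockEquiv.measurable
  refine Eq.trans ?_ (congrArg volume.restrict (iUnion_block (N := N)))
  rw [Measure.restrict_iUnion pairwise_disjoint_block fun _ => measurableSet_Ico]
  ext s hs
  rw [Measure.map_apply hm hs, blockMeasure, Measure.prod_apply (hm hs), lintegral_fintype,
    Measure.sum_apply _ hs, tsum_fintype]
  refine Finset.sum_congr rfl fun i _ => ?_
  rw [uniformOn_univ_singleton, Fintype.card_fin, preimage_preimage,
    ← Measure.map_apply (by fun_prop) hs, map_blockEquiv_mk, Measure.smul_apply, smul_eq_mul,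
    mul_comm, ← mul_assoc,
    ENNReal.inv_mul_cancel (Nat.cast_ne_zero.2 (NeZero.ne N)) (ENNReal.natCast_ne_top N), one_mul]

lemma measurePreserving_blockEquiv : MeasurePreserving blockEquiv (blockMeasure N) volume := by
  refine ⟨blockEquiv.measurable, ?_⟩
  have hemb := MeasurableEmbedding.subtype_coe (measurableSet_Ico (a := (0:ℝ)) (b := 1))
  calc Measure.map blockEquiv (blockMeasure N)
      = (Measure.map Subtype.val (Measure.map blockEquiv (blockMeasure N))).comap Subtype.val :=
        (hemb.comap_map _).symm
    _ = (Measure.map (Subtype.val : UnitIco → ℝ) volume).comap Subtype.val := by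
        rw [Measure.map_map hemb.measurable blockEquiv.measurable, map_coe_volume_unitIco]
        exact congrArg _ map_coe_blockEquiv
    _ = volume := hemb.comap_map _

lemma preimage_omegaCore_shuffle (π : Equiv.Perm (Fin N)) {h g H G : UnitIco → UnitIco}
    (hH : Semiconj blockEquiv (Prod.map π h) H) (hG : Semiconj blockEquiv (Prod.map π.symm g) G) :
    Prod.map blockEquiv blockEquiv ⁻¹' omegaCore H G = shuffleOff π ∪ shuffleDiag π h g := by
  ext ⟨⟨i, s⟩, ⟨j, t⟩⟩
  -- compare lexicographically; the two mixed cases contradict `π.symm j = i ↔ j = π i`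
  simp only [omegaCore, shuffleOff, shuffleDiag, mem_preimage, Prod.map, mem_ofPred_eq, mem_union,
    ← hH.eq, ← hG.eq, blockEquiv_le_blockEquiv]
  have hπ : π.symm j = i ↔ j = π i := π.symm_apply_eq
  grind

lemma blockMeasure_prod_shuffleDiag (π : Equiv.Perm (Fin N)) {h g : UnitIco → UnitIco}
    (hh : Measurable h) (hg : Measurable g) :
    (blockMeasure N).prod (blockMeasure N) (shuffleDiag π h g) =
      (N : ℝ≥0∞)⁻¹ * volume (omegaCore h g) := by
  have hslice : ∀ p : Fin N × UnitIco, blockMeasure N (Prod.mk p ⁻¹' shuffleDiag π h g) =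
      (N : ℝ≥0∞)⁻¹ * volume (Prod.mk p.2 ⁻¹' omegaCore h g) := fun p => by
    have : Prod.mk p ⁻¹' shuffleDiag π h g = {π p.1} ×ˢ (Prod.mk p.2 ⁻¹' omegaCore h g) := by
      ext; simp [shuffleDiag]
    rw [this, blockMeasure, Measure.prod_prod, uniformOn_univ_singleton, Fintype.card_fin]
  have hm := measurable_measure_prodMk_left (ν := volume) (measurableSet_omegaCore hh hg)
  rw [Measure.prod_apply (measurableSet_shuffleDiag π hh hg)]
  simp_rw [hslice]
  rw [lintegral_const_mul _ (show Measurable fun p : Fin N × UnitIco =>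
      volume (Prod.mk p.2 ⁻¹' omegaCore h g) from hm.comp measurable_snd),
    ← lintegral_map hm measurable_snd,
    blockMeasure, Measure.map_snd_prod, measure_univ, one_smul, Measure.volume_eq_prod,
    Measure.prod_apply (measurableSet_omegaCore hh hg)]

lemma semiconj_blockEquiv_of_shuffle (π : Equiv.Perm (Fin N)) {f : UnitIco → UnitIco}
    (hf : ∀ (x : UnitIco) (i : Fin N), ((i : ℕ) : ℝ) / N ≤ (x : ℝ) →
      (x : ℝ) < (((i : ℕ) : ℝ) + 1) / N →
        (f x : ℝ) = (x : ℝ) - ((i : ℕ) : ℝ) / N + ((π i : ℕ) : ℝ) / N) :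
    Semiconj blockEquiv (Prod.map π id) f := by
  rintro ⟨i, t⟩
  have hN := natCast_pos_real (N := N)
  have hlo : ((i : ℕ) : ℝ) / N ≤ blockEquiv (i, t) := by
    rw [blockEquiv_coe, div_le_div_iff_of_pos_right hN]; linarith [t.2.1]
  have hhi : (blockEquiv (i, t) : ℝ) < (((i : ℕ) : ℝ) + 1) / N := by
    rw [blockEquiv_coe, div_lt_div_iff_of_pos_right hN]; linarith [t.2.2]
  refine Subtype.ext ?_
  rw [hf _ i hlo hhi, blockEquiv_coe, Prod.map_apply, blockEquiv_coe]
  simp only [id]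
  field_simp
  ring

lemma volume_omegaCore_of_semiconj (π : Equiv.Perm (Fin N)) {h g H G : UnitIco → UnitIco}
    (hh : Measurable h) (hg : Measurable g) (hH : Semiconj blockEquiv (Prod.map π h) H)
    (hG : Semiconj blockEquiv (Prod.map π.symm g) G) :
    volume (omegaCore H G) = (blockMeasure N).prod (blockMeasure N) (shuffleOff π) +
      (N : ℝ≥0∞)⁻¹ * volume (omegaCore h g) := by
  have hdisj : Disjoint (shuffleOff π) (shuffleDiag π h g) :=
    Set.disjoint_left.2 fun p hoff hdiag => (hdiag.1 ▸ hoff.1).false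
  have hmp : MeasurePreserving (blockEquiv.prodCongr blockEquiv)
      ((blockMeasure N).prod (blockMeasure N)) volume :=
    measurePreserving_blockEquiv.prod measurePreserving_blockEquiv
  rw [← hmp.measure_preimage_equiv]
  change (blockMeasure N).prod (blockMeasure N) (Prod.map blockEquiv blockEquiv ⁻¹' _) = _
  rw [preimage_omegaCore_shuffle π hH hG, measure_union hdisj (measurableSet_shuffleDiag π hh hg),
    blockMeasure_prod_shuffleDiag π hh hg]

end

end IcoShuffle

open IcoShuffle

/-- For `N ≥ 2`, a permutation `π` of `{0,…,N-1}` and a measure-preserving bijection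
`h` of `[0,1)` with measure-preserving inverse `g`, the map
`H(x) = π(i)/N + h(Nx - i)/N` on `[i/N, (i+1)/N)` (corresponding to `V_π(A_h)`) is a
measure-preserving bijection and `λ₂(Ω√2^H) = λ₂(Ω√2^{h_π}) + (1/N)·λ₂(Ω√2^h)`,
where `h_π` is the straight shuffle `h_π x = x - i/N + π(i)/N` on `[i/N, (i+1)/N)`. -/
theorem stmt_15 (N : ℕ) (hN : 2 ≤ N) (π : Equiv.Perm (Fin N))
    (h g : Ico (0:ℝ) 1 → Ico (0:ℝ) 1)
    (hmp : MeasurePreserving h volume volume)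
    (hgl : Function.LeftInverse g h) (hgr : Function.RightInverse g h)
    (hgmp : MeasurePreserving g volume volume)
    (hπ gπ H G : Ico (0:ℝ) 1 → Ico (0:ℝ) 1)
    (hπspec : ∀ (x : Ico (0:ℝ) 1) (i : Fin N),
      ((i : ℕ) : ℝ) / N ≤ (x : ℝ) → (x : ℝ) < (((i : ℕ) : ℝ) + 1) / N →
        (hπ x : ℝ) = (x : ℝ) - ((i : ℕ) : ℝ) / N + ((π i : ℕ) : ℝ) / N)
    (hgπspec : ∀ (y : Ico (0:ℝ) 1) (j : Fin N),
      ((j : ℕ) : ℝ) / N ≤ (y : ℝ) → (y : ℝ) < (((j : ℕ) : ℝ) + 1) / N →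
        (gπ y : ℝ) = (y : ℝ) - ((j : ℕ) : ℝ) / N + ((π.symm j : ℕ) : ℝ) / N)
    (hHspec : ∀ (i : Fin N) (t : Ico (0:ℝ) 1),
      (H ⟨(((i : ℕ) : ℝ) + (t : ℝ)) / N, by
          have hN0 : (0:ℝ) < N := by
            have : 0 < N := by omega
            exact_mod_cast this
          constructor
          · exact div_nonneg (add_nonneg (Nat.cast_nonneg _) t.2.1) hN0.le
          · rw [div_lt_one hN0]
            have h1 : (t : ℝ) < 1 := t.2.2
            have h2 : ((i : ℕ) : ℝ) + 1 ≤ N := by exact_mod_cast i.is_lt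
            linarith⟩ : ℝ) = (((π i : ℕ) : ℝ) + (h t : ℝ)) / N)
    (hGspec : ∀ (j : Fin N) (t : Ico (0:ℝ) 1),
      (G ⟨(((j : ℕ) : ℝ) + (t : ℝ)) / N, by
          have hN0 : (0:ℝ) < N := by
            have : 0 < N := by omega
            exact_mod_cast this
          constructor
          · exact div_nonneg (add_nonneg (Nat.cast_nonneg _) t.2.1) hN0.le
          · rw [div_lt_one hN0]
            have h1 : (t : ℝ) < 1 := t.2.2
            have h2 : ((j : ℕ) : ℝ) + 1 ≤ N := by exact_mod_cast j.is_lt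
            linarith⟩ : ℝ) = (((π.symm j : ℕ) : ℝ) + (g t : ℝ)) / N) :
    Function.Bijective H ∧
    MeasurePreserving H volume volume ∧
    Function.LeftInverse G H ∧ Function.RightInverse G H ∧
    (volume (OmegaSqrtTwo H G)).toReal =
      (volume (OmegaSqrtTwo hπ gπ)).toReal +
        (1 / (N : ℝ)) * (volume (OmegaSqrtTwo h g)).toReal := by
  have : NeZero N := ⟨by omega⟩
  have hH : Semiconj blockEquiv (Prod.map π h) H := fun p => (Subtype.ext (hHspec p.1 p.2)).symm
  have hG : Semiconj blockEquiv (Prod.map π.symm g) G :=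
    fun p => (Subtype.ext (hGspec p.1 p.2)).symm
  have hGH : LeftInverse G H :=
    leftInverse_of_semiconj blockEquiv.toEquiv hH hG (π.left_inv.prodMap hgl)
  have hHG : RightInverse G H :=
    leftInverse_of_semiconj blockEquiv.toEquiv hG hH (π.right_inv.prodMap hgr)
  refine ⟨⟨hGH.injective, hHG.surjective⟩,
    measurePreserving_of_semiconj blockEquiv measurePreserving_blockEquiv
      (measurePreserving_prodMap π hmp) hH, hGH, hHG, ?_⟩
  have hΩH := volume_omegaCore_of_semiconj π hmp.measurable hgmp.measurable hH hG
  have hΩπ := volume_omegaCore_of_semiconj π measurable_id measurable_id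
    (semiconj_blockEquiv_of_shuffle π hπspec) (semiconj_blockEquiv_of_shuffle π.symm hgπspec)
  rw [volume_omegaCore_id, mul_zero, add_zero] at hΩπ
  rw [volume_omegaSqrtTwo, volume_omegaSqrtTwo, volume_omegaSqrtTwo, hΩH, ← hΩπ,
    ENNReal.toReal_add (measure_ne_top _ _)
      (ENNReal.mul_ne_top (ENNReal.inv_ne_top.2 (NeZero.ne _)) (measure_ne_top _ _)),
    ENNReal.toReal_mul, ENNReal.toReal_inv, ENNReal.toReal_natCast, one_div]
end
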